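/- Let w ∈ W_n be ascending with RS(w) = (P,Q), let n_k denote the common set of labels of the component tableaux P_k and Q_k, let u_k be the permutation of the ordered set n_k whose classical Robinson–Schensted image is (P_k,Q_k) (with u_k the identity if n_k is empty), each viewed as a permutation matrix in W_n fixing all other values, and let u_r = [ζ^{a_1}·1, ζ^{a_2}·2, …, ζ^{a_n}·n] be the diagonal part of w. Then w = u_0·u_1⋯u_{r−1}·u_r, and consequently sgn_i(w) = sgn(u_0)·sgn(u_1)⋯sgn(u_{r−1})·(ζ^i)^{a_1+⋯+a_n} for each 0 ≤ i ≤ r−1. -/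

import Mathlib

open scoped BigOperators

/-!
Common definitions: the complex reflection group `G(r,1,n)` recorded in one-line
notation, its one-dimensional representations, the generalized Robinson–Schensted
map to pairs of `r`-multitableaux, and the associated tableau statistics.
-/

/-- An element of `W_n = G(r,1,n)` in one-line notation
`w = [ζ^{a 0} σ 0, …, ζ^{a (n-1)} σ (n-1)]`: the nonzero entry of column `i`
is `ζ ^ (a i)` and lies in row `σ i`. -/
@[ext]
structure GW (r n : ℕ) where
  a : Fin n → ZMod r
  σ : Equiv.Perm (Fin n)

namespace GW

variable {r n : ℕ}

instance : Mul (GW r n) := ⟨fun w v => ⟨fun j => w.a (v.σ j) + v.a j, w.σ * v.σ⟩⟩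
instance : One (GW r n) := ⟨⟨fun _ => 0, 1⟩⟩
instance : Inv (GW r n) := ⟨fun w => ⟨fun j => -(w.a (w.σ⁻¹ j)), w.σ⁻¹⟩⟩

@[simp] lemma mul_a (w v : GW r n) (j : Fin n) : (w * v).a j = w.a (v.σ j) + v.a j := rfl
@[simp] lemma mul_sigma (w v : GW r n) : (w * v).σ = w.σ * v.σ := rfl
@[simp] lemma one_a (j : Fin n) : (1 : GW r n).a j = 0 := rfl
@[simp] lemma one_sigma : (1 : GW r n).σ = 1 := rfl
@[simp] lemma inv_a (w : GW r n) (j : Fin n) : (w⁻¹).a j = -(w.a (w.σ⁻¹ j)) := rfl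
@[simp] lemma inv_sigma (w : GW r n) : (w⁻¹).σ = w.σ⁻¹ := rfl

instance : Group (GW r n) where
  mul_assoc w v u := by
    ext j
    · simp [Equiv.Perm.mul_apply, add_assoc]
    · simp [mul_assoc]
  one_mul w := by ext j <;> simp
  mul_one w := by ext j <;> simp
  inv_mul_cancel w := by
    ext j
    · simp
    · simp

end GW

/-- `ζ = exp(2π√-1 / r)`, a primitive `r`-th root of unity. -/
noncomputable def zeta (r : ℕ) : ℂ := Complex.exp (2 * Real.pi * Complex.I / r)

/-- The one-dimensional representation `sgn_i` of `W_n = G(r,1,n)`: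
`sgn_i w = ζ^{i (a_1 + ⋯ + a_n)} ⬝ sgn σ`. -/
noncomputable def sgnRep (r n : ℕ) (i : ℕ) (w : GW r n) : ℂ :=
  zeta r ^ (i * ∑ j, (w.a j).val) * ((Equiv.Perm.sign w.σ : ℤ) : ℂ)

/-- A tableau, recorded as its list of rows of labels. -/
abbrev Tab := List (List ℕ)

/-- Robinson–Schensted row insertion of the value `x` into a tableau. -/
def rowInsert : ℕ → Tab → Tab
  | x, [] => [[x]]
  | x, row :: rest =>
    if h : row.findIdx (fun y => decide (x < y)) < row.length then
      row.set (row.findIdx (fun y => decide (x < y))) x ::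
        rowInsert (row.get ⟨row.findIdx (fun y => decide (x < y)), h⟩) rest
    else (row ++ [x]) :: rest

/-- The shape of a tableau: its list of row lengths. -/
def shape (T : Tab) : List ℕ := T.map List.length

/-- Append the label `lab` at the end of row `i` of the (recording) tableau `Q`. -/
def place (Q : Tab) (i lab : ℕ) : Tab :=
  if i < Q.length then Q.set i ((Q.getD i []) ++ [lab]) else Q ++ [[lab]]

/-- One step of the Robinson–Schensted algorithm: insert the value `x` into the
insertion tableau and record the label `lab` in the new box of the recording
tableau. -/
def RSstep : Tab × Tab → ℕ × ℕ → Tab × Tab := fun PQ xl =>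
  let P' := rowInsert xl.1 PQ.1
  let i := (List.range P'.length).findIdx
    (fun i => decide ((PQ.1.getD i []).length < (P'.getD i []).length))
  (P', place PQ.2 i xl.2)

/-- The classical Robinson–Schensted correspondence applied to a word of
(value, label) pairs, producing the insertion and recording tableaux. -/
def RSword (word : List (ℕ × ℕ)) : Tab × Tab := word.foldl RSstep ([], [])

/-- The positions `i` (in increasing order) whose attached exponent `a i` equals `k`. -/
def labelIdx {r n : ℕ} (w : GW r n) (k : ℕ) : List (Fin n) :=
  (List.finRange n).filter (fun i => decide ((w.a i).val = k))

/-- The word `w^(k)` together with its recording labels: the values `σ i` (1-based)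
attached to the positions `i` (1-based) with `a i = k`, in increasing order of `i`. -/
def wordPairs {r n : ℕ} (w : GW r n) (k : ℕ) : List (ℕ × ℕ) :=
  (labelIdx w k).map (fun i => ((w.σ i : ℕ) + 1, (i : ℕ) + 1))

/-- The insertion multitableau `P(w)` of the generalized Robinson–Schensted map. -/
def Ptab {r n : ℕ} (w : GW r n) : Fin r → Tab := fun k => (RSword (wordPairs w k)).1

/-- The recording multitableau `Q(w)` of the generalized Robinson–Schensted map. -/
def Qtab {r n : ℕ} (w : GW r n) : Fin r → Tab := fun k => (RSword (wordPairs w k)).2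

/-- The set of labels of a tableau. -/
def labels (T : Tab) : Finset ℕ := T.flatten.toFinset

/-- The (0-based) index of the row of `T` containing the label `x`. -/
def rowOf (T : Tab) (x : ℕ) : ℕ := T.findIdx (fun row => decide (x ∈ row))

/-- The number of inversions of a tableau: pairs `(i, j)` with `i < j` and the box
labeled `i` in a row strictly below the box labeled `j`. -/
def invTab (T : Tab) : ℕ :=
  ((labels T ×ˢ labels T).filter (fun p => p.1 < p.2 ∧ rowOf T p.2 < rowOf T p.1)).card

/-- `crossInv S T` is the number of pairs `(j, i)` with `j > i`, `j` a label of `S`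
and `i` a label of `T`, i.e. the cardinality of `Inv(S, T)`. -/
def crossInv (S T : Tab) : ℕ :=
  ((labels S ×ˢ labels T).filter (fun p => p.2 < p.1)).card

/-- The number of inversions of a multitableau. -/
def invMulti {r : ℕ} (T : Fin r → Tab) : ℕ :=
  (∑ k, invTab (T k)) + ∑ k, ∑ l, if k < l then crossInv (T k) (T l) else 0

/-- The sign `(-1)^{inv T}` of a multitableau. -/
def signMulti {r : ℕ} (T : Fin r → Tab) : ℂ := (-1) ^ invMulti T

/-- The number of boxes in the even-indexed rows (1-based indexing) of a tableau. -/
def eTab (T : Tab) : ℕ :=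
  ∑ i ∈ Finset.range T.length, if i % 2 = 1 then (T.getD i []).length else 0

/-- The total number of boxes in the even-indexed rows of a multitableau. -/
def eMulti {r : ℕ} (T : Fin r → Tab) : ℕ := ∑ k, eTab (T k)

/-- The number of boxes of a tableau. -/
def sizeTab (T : Tab) : ℕ := T.flatten.length

/-- `2 ⬝ spin T = Σ_k k ⬝ |sh(T_k)|`. -/
def twoSpin {r : ℕ} (T : Fin r → Tab) : ℕ := ∑ k : Fin r, (k : ℕ) * sizeTab (T k)

/-- The spin statistic `spin T = (1/2) Σ_k k ⬝ |sh(T_k)|`. -/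
def spin {r : ℕ} (T : Fin r → Tab) : ℚ := (twoSpin T : ℚ) / 2

/-- The function `π_i(w) = (-1)^{e(P)} (ζ^i)^{spin P + spin Q} sign(P) sign(Q)`
where `(P, Q) = RS(w)`. -/
noncomputable def piStat (r n : ℕ) (i : ℕ) (w : GW r n) : ℂ :=
  (-1) ^ eMulti (Ptab w) *
    (zeta r ^ i) ^ (((spin (Ptab w) + spin (Qtab w) : ℚ) : ℂ)) *
    signMulti (Ptab w) * signMulti (Qtab w)

/-- `T` is a standard Young `r`-multitableau of rank `n`: each component consists of
nonempty rows of weakly decreasing lengths, labels strictly increase along rows and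
down columns, and the labels used are exactly `1, …, n`, each exactly once. -/
def IsStandardMulti (r n : ℕ) (T : Fin r → Tab) : Prop :=
  (∀ k : Fin r,
      (∀ row ∈ T k, row ≠ [] ∧ List.Chain' (· < ·) row) ∧
      List.Chain' (fun r1 r2 => r2.length ≤ r1.length ∧
        ∀ j < r2.length, r1.getD j 0 < r2.getD j 0) (T k)) ∧
  (∑ k : Fin r, ((T k).flatten : Multiset ℕ)) = (Finset.Icc 1 n).val

/-- A multitableau is ascending if every label of `T k` is smaller than every label
of `T (k+1)`. -/
def AscendingMulti {r : ℕ} (T : Fin r → Tab) : Prop :=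
  ∀ (k : ℕ) (h : k + 1 < r),
    ∀ x ∈ labels (T ⟨k, by omega⟩), ∀ y ∈ labels (T ⟨k + 1, h⟩), x < y

/-- An element `w ∈ W_n` is ascending if its exponents increase weakly and, for each
`k < r - 1`, every element of the word `w^(k)` is smaller than every element of
`w^(k+1)`. -/
def AscendingElem {r n : ℕ} (w : GW r n) : Prop :=
  (∀ i j : Fin n, i ≤ j → (w.a i).val ≤ (w.a j).val) ∧
  ∀ k : ℕ, k + 1 < r →
    ∀ x ∈ (wordPairs w k).map Prod.fst, ∀ y ∈ (wordPairs w (k + 1)).map Prod.fst, x < y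

/-- The generator `s_0 = [ζ·1, 2, …, n]`. -/
def s0El (r n : ℕ) : GW r n := ⟨fun i => if (i : ℕ) = 0 then 1 else 0, 1⟩

/-- The generator `s_j` (for `1 ≤ j ≤ n - 1`): the permutation matrix of the
transposition interchanging `j` and `j + 1` (1-based values). -/
def sEl (r n : ℕ) (j : ℕ) (h1 : 1 ≤ j) (h2 : j + 1 ≤ n) : GW r n :=
  ⟨fun _ => 0, Equiv.swap ⟨j - 1, by omega⟩ ⟨j, by omega⟩⟩

/-- The left operator `L_j(w) = s_j ⬝ w`. -/
def Lop {r n : ℕ} (w : GW r n) (j : ℕ) (h1 : 1 ≤ j) (h2 : j + 1 ≤ n) : GW r n :=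
  sEl r n j h1 h2 * w

/-- The right operator `R_j(w) = w ⬝ s_j`. -/
def Rop {r n : ℕ} (w : GW r n) (j : ℕ) (h1 : 1 ≤ j) (h2 : j + 1 ≤ n) : GW r n :=
  w * sEl r n j h1 h2

/-- `L_j` is left admissible for `w`: the exponents attached to the entries with
values `j` and `j+1` differ. -/
def LeftAdm {r n : ℕ} (w : GW r n) (j : ℕ) (h1 : 1 ≤ j) (h2 : j + 1 ≤ n) : Prop :=
  w.a (w.σ⁻¹ ⟨j - 1, by omega⟩) ≠ w.a (w.σ⁻¹ ⟨j, by omega⟩)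

/-- `R_j` is right admissible for `w`: the exponents in positions `j` and `j+1`
differ, i.e. `a_j ≠ a_{j+1}`. -/
def RightAdm {r n : ℕ} (w : GW r n) (j : ℕ) (h1 : 1 ≤ j) (h2 : j + 1 ≤ n) : Prop :=
  w.a ⟨j - 1, by omega⟩ ≠ w.a ⟨j, by omega⟩

/-- A single admissible transformation: `w ↦ L_j(w)` for a left admissible `L_j`,
or `w ↦ R_j(w)` for a right admissible `R_j`. -/
inductive AdmStep (r n : ℕ) : GW r n → GW r n → Prop
  | left (w : GW r n) (j : ℕ) (h1 : 1 ≤ j) (h2 : j + 1 ≤ n)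
      (ha : LeftAdm w j h1 h2) : AdmStep r n w (Lop w j h1 h2)
  | right (w : GW r n) (j : ℕ) (h1 : 1 ≤ j) (h2 : j + 1 ≤ n)
      (ha : RightAdm w j h1 h2) : AdmStep r n w (Rop w j h1 h2)

/-!
The theorem rests on the injectivity of the classical Robinson–Schensted correspondence on
words with distinct letters and a fixed sequence of distinct labels. Given it, the hypothesis on
`u k` forces `(u k).σ` to agree with `w.σ` on the positions `n_k`; as the `u k` permute disjoint
blocks of positions, their product is the permutation part of `w`, and the sign formula follows
from the multiplicativity of the sign of a permutation.

Injectivity goes one letter at a time. Removing the box of the last label from the recording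
tableau recovers the previous recording tableau, hence the previous shape; and row insertion into
tableaux of a fixed shape with increasing rows is injective, because in each row the bumped entry
and the new row determine the position of the inserted entry: it is the last one smaller than
the bumped entry.
-/

open List

abbrev bumpIdx (x : ℕ) (row : List ℕ) : ℕ := row.findIdx fun y => decide (x < y)

theorem lt_getElem_bumpIdx {x : ℕ} {row : List ℕ} (h : bumpIdx x row < row.length) :
    x < row[bumpIdx x row] := by
  simpa using List.findIdx_getElem (w := h)

theorem getElem_lt_of_lt_bumpIdx {x : ℕ} {row : List ℕ} (hx : x ∉ row) {q : ℕ}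
    (hq : q < bumpIdx x row) (hql : q < row.length) : row[q] < x := by
  have h1 : ¬ x < row[q] := by simpa using List.not_of_lt_findIdx hq
  have h2 : row[q] ≠ x := fun e => hx (e ▸ List.getElem_mem _)
  omega

theorem List.SortedLT.set_bumpIdx {x : ℕ} {row : List ℕ} (h : row.SortedLT) (hx : x ∉ row)
    (hp : bumpIdx x row < row.length) : (row.set (bumpIdx x row) x).SortedLT := by
  refine sortedLT_of_getElem_lt_getElem_of_lt fun i j hi hj hij => ?_
  simp only [List.length_set] at hi hj
  simp only [List.getElem_set]
  split_ifs with hpi hpj hpj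
  · omega
  · exact (lt_getElem_bumpIdx hp).trans (h.getElem_lt_getElem_of_lt (by omega))
  · exact getElem_lt_of_lt_bumpIdx hx (by omega) hi
  · exact h.getElem_lt_getElem_of_lt hij

theorem List.SortedLT.append_singleton_of_not_bumpIdx_lt {x : ℕ} {row : List ℕ}
    (h : row.SortedLT) (hx : x ∉ row) (hp : ¬ bumpIdx x row < row.length) :
    (row ++ [x]).SortedLT := by
  have hall : ∀ y ∈ row, y < x := by
    have := List.findIdx_eq_length.mp (le_antisymm List.findIdx_le_length (not_lt.mp hp))
    intro y hy
    have h1 : ¬ x < y := by simpa using this y hy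
    have h2 : y ≠ x := fun e => hx (e ▸ hy)
    omega
  rw [sortedLT_iff_pairwise, List.pairwise_append]
  exact ⟨h.pairwise, by simp, fun a ha b hb => List.eq_of_mem_singleton hb ▸ hall a ha⟩

theorem nodup_getElem_cons_of_nodup_append {α : Type*} {l F : List α} {p : ℕ}
    (h : (l ++ F).Nodup) (hp : p < l.length) : (l[p] :: F).Nodup :=
  ((List.singleton_sublist.mpr (List.getElem_mem hp)).append (List.Sublist.refl F)).nodup h

def SortedRows (P : Tab) : Prop := ∀ row ∈ P, row.SortedLT

theorem flatten_rowInsert_perm (x : ℕ) (P : Tab) :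
    (rowInsert x P).flatten ~ x :: P.flatten := by
  induction P generalizing x with
  | nil => simp [rowInsert]
  | cons row rest ih =>
    rw [rowInsert]
    split
    · rename_i h
      simp only [List.flatten_cons, List.get_eq_getElem]
      calc row.set (bumpIdx x row) x ++ (rowInsert row[bumpIdx x row] rest).flatten
          ~ (x :: row.eraseIdx (bumpIdx x row)) ++ (row[bumpIdx x row] :: rest.flatten) :=
            (List.set_perm_cons_eraseIdx h x).append (ih _)
        _ ~ x :: ((row[bumpIdx x row] :: row.eraseIdx (bumpIdx x row)) ++ rest.flatten) :=
            List.perm_middle.cons x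
        _ ~ x :: (row ++ rest.flatten) :=
            ((List.getElem_cons_eraseIdx_perm h).append_right _).cons x
    · simp

theorem SortedRows.rowInsert {x : ℕ} {P : Tab} (hP : SortedRows P)
    (hnd : (x :: P.flatten).Nodup) : SortedRows (rowInsert x P) := by
  induction P generalizing x with
  | nil => simp [SortedRows, _root_.rowInsert, sortedLT_iff_pairwise]
  | cons row rest ih =>
    simp only [List.flatten_cons, List.nodup_cons, List.mem_append, not_or] at hnd
    have hx : x ∉ row := hnd.1.1
    rw [_root_.rowInsert]
    split
    · rename_i h
      intro row' hrow'
      rcases List.mem_cons.mp hrow' with rfl | hrow'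
      · exact (hP row (by simp)).set_bumpIdx hx h
      · refine ih (fun r hr => hP r (by simp [hr])) ?_ _ hrow'
        exact nodup_getElem_cons_of_nodup_append hnd.2 h
    · rename_i h
      intro row' hrow'
      rcases List.mem_cons.mp hrow' with rfl | hrow'
      · exact (hP row (by simp)).append_singleton_of_not_bumpIdx_lt hx h
      · exact hP row' (by simp [hrow'])

def addBox (s : List ℕ) (i : ℕ) : List ℕ :=
  if i < s.length then s.set i (s.getD i 0 + 1) else s ++ [1]

theorem addBox_cons_succ (a : ℕ) (s : List ℕ) (i : ℕ) :
    addBox (a :: s) (i + 1) = a :: addBox s i := by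
  simp only [addBox, List.length_cons, Nat.add_lt_add_iff_right, List.getD_cons_succ]
  split <;> simp

theorem length_addBox (s : List ℕ) (i : ℕ) :
    (addBox s i).length = if i < s.length then s.length else s.length + 1 := by
  unfold addBox; split <;> simp

theorem getD_addBox (s : List ℕ) {i : ℕ} (hi : i ≤ s.length) (j : ℕ) :
    (addBox s i).getD j 0 = if j = i then s.getD i 0 + 1 else s.getD j 0 := by
  simp only [addBox, List.getD_eq_getElem?_getD]
  split_ifs with hs hj hj
  · subst hj; simp [hs]
  · simp [Ne.symm hj]
  · obtain rfl : i = s.length := by omega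
    subst hj; simp
  · obtain rfl : i = s.length := by omega
    rcases lt_or_gt_of_ne hj with h | h
    · simp [List.getElem?_append_left h]
    · rw [List.getElem?_append_right h.le, List.getElem?_eq_none (by simp; omega),
        List.getElem?_eq_none h.le]

theorem length_shape (P : Tab) : (shape P).length = P.length := List.length_map _

theorem getD_shape (P : Tab) (i : ℕ) : (shape P).getD i 0 = (P.getD i []).length := by
  simp only [shape, List.getD_eq_getElem?_getD, List.getElem?_map]
  cases P[i]? <;> rfl

theorem shape_rowInsert (x : ℕ) (P : Tab) :
    ∃ i ≤ P.length, shape (rowInsert x P) = addBox (shape P) i := by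
  induction P generalizing x with
  | nil => exact ⟨0, le_refl _, by simp [rowInsert, shape, addBox]⟩
  | cons row rest ih =>
    rw [rowInsert]
    split
    · obtain ⟨i, hi, hs⟩ := ih (row.get ⟨bumpIdx x row, by assumption⟩)
      refine ⟨i + 1, by simpa using hi, ?_⟩
      simp only [shape, List.map_cons, List.length_set] at hs ⊢
      rw [addBox_cons_succ, hs]
    · exact ⟨0, by omega, by simp [shape, addBox]⟩

theorem shape_place (Q : Tab) (i l : ℕ) :
    shape (place Q i l) = addBox (shape Q) i := by
  unfold place addBox
  rw [length_shape]
  split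
  · simp only [shape, List.map_set, List.length_append, List.length_cons, List.length_nil]
    rw [← shape, getD_shape]
  · simp [shape]

theorem findIdx_length_lt_eq_of_shape_eq_addBox {P P' : Tab} {i₀ : ℕ}
    (hi₀ : i₀ ≤ P.length) (hs : shape P' = addBox (shape P) i₀) :
    (List.range P'.length).findIdx
      (fun i => decide ((P.getD i []).length < (P'.getD i []).length)) = i₀ := by
  have hgrow : ∀ i, (P.getD i []).length < (P'.getD i []).length ↔ i = i₀ := by
    intro i
    rw [← getD_shape, ← getD_shape, hs, getD_addBox _ (by rwa [length_shape])]
    split_ifs with h <;> simp [h]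
  have hlen : i₀ < P'.length := by
    rw [← length_shape, hs, length_addBox, length_shape]
    split <;> omega
  rw [List.findIdx_eq (by simpa using hlen)]
  simp only [List.getElem_range, hgrow, decide_eq_true_eq, decide_eq_false_iff_not]
  exact ⟨trivial, fun j hj => hj.ne⟩

theorem RSstep_eq_place {P Q : Tab} (hPQ : shape P = shape Q) (x l : ℕ) :
    ∃ i, shape (rowInsert x P) = addBox (shape Q) i ∧
      RSstep (P, Q) (x, l) = (rowInsert x P, place Q i l) := by
  obtain ⟨i, hi, hs⟩ := shape_rowInsert x P
  refine ⟨i, hPQ ▸ hs, ?_⟩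
  simp only [RSstep, findIdx_length_lt_eq_of_shape_eq_addBox hi hs]

theorem flatten_place_perm (Q : Tab) (i l : ℕ) : (place Q i l).flatten ~ l :: Q.flatten := by
  unfold place
  split
  · rename_i h
    rw [List.getD_eq_getElem _ _ h]
    calc (Q.set i (Q[i] ++ [l])).flatten ~ ((Q[i] ++ [l]) :: Q.eraseIdx i).flatten :=
          (List.set_perm_cons_eraseIdx h _).flatten
      _ ~ l :: (Q[i] :: Q.eraseIdx i).flatten := by simp
      _ ~ l :: Q.flatten := ((List.getElem_cons_eraseIdx_perm h).flatten).cons l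
  · simp

theorem ne_nil_of_mem_place {Q : Tab} (hQ : ∀ row ∈ Q, row ≠ []) (i l : ℕ) :
    ∀ row ∈ place Q i l, row ≠ [] := by
  unfold place
  split
  · intro row hrow
    rcases List.mem_or_eq_of_mem_set hrow with h | rfl
    · exact hQ row h
    · simp
  · intro row hrow
    rcases List.mem_append.mp hrow with h | h
    · exact hQ row h
    · simp_all

def unplace (T : Tab) (l : ℕ) : Tab := (T.map (·.erase l)).filter fun row => !row.isEmpty

theorem unplace_place {Q : Tab} (hQ : ∀ row ∈ Q, row ≠ []) {l : ℕ} (hl : l ∉ Q.flatten)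
    (i : ℕ) : unplace (place Q i l) l = Q := by
  have hrow : ∀ row ∈ Q, row.erase l = row :=
    fun row h => List.erase_of_not_mem fun hl' => hl (List.mem_flatten.mpr ⟨row, h, hl'⟩)
  have hmap : Q.map (·.erase l) = Q := by rw [List.map_congr_left hrow, List.map_id']
  have hfilter : Q.filter (fun row => !row.isEmpty) = Q :=
    List.filter_eq_self.mpr (by simpa using hQ)
  unfold unplace place
  split
  · rename_i h
    rw [List.map_set, List.getD_eq_getElem _ _ h, List.erase_append_right _
      fun hl' => hl (List.mem_flatten.mpr ⟨_, List.getElem_mem h, hl'⟩)]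
    simp [hmap, hfilter]
  · simp [hmap, hfilter]

theorem place_left_injective {Q₁ Q₂ : Tab} (hQ₁ : ∀ row ∈ Q₁, row ≠ [])
    (hQ₂ : ∀ row ∈ Q₂, row ≠ []) {l : ℕ} (hl₁ : l ∉ Q₁.flatten)
    (hl₂ : l ∉ Q₂.flatten) {i₁ i₂ : ℕ} (h : place Q₁ i₁ l = place Q₂ i₂ l) :
    Q₁ = Q₂ := by
  rw [← unplace_place hQ₁ hl₁ i₁, h, unplace_place hQ₂ hl₂ i₂]

theorem bumpIdx_le_of_set_eq {row₁ row₂ : List ℕ} {x₁ x₂ : ℕ} (h₁ : row₁.SortedLT)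
    (hb₁ : bumpIdx x₁ row₁ < row₁.length) (hb₂ : bumpIdx x₂ row₂ < row₂.length)
    (hy : row₁[bumpIdx x₁ row₁] = row₂[bumpIdx x₂ row₂])
    (h : row₁.set (bumpIdx x₁ row₁) x₁ = row₂.set (bumpIdx x₂ row₂) x₂) :
    bumpIdx x₂ row₂ ≤ bumpIdx x₁ row₁ := by
  by_contra! hlt
  have hlen : row₁.length = row₂.length := by simpa using congrArg List.length h
  have hp₂ :
      (row₁.set (bumpIdx x₁ row₁) x₁)[bumpIdx x₂ row₂]'(by simp; omega) = x₂ := by simp [h]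
  rw [List.getElem_set_ne hlt.ne] at hp₂
  have := h₁.getElem_lt_getElem_of_lt (hi := hb₁) (hj := by omega) hlt
  have := lt_getElem_bumpIdx hb₂
  omega

theorem set_bumpIdx_injective {row₁ row₂ : List ℕ} {x₁ x₂ : ℕ} (h₁ : row₁.SortedLT)
    (h₂ : row₂.SortedLT) (hb₁ : bumpIdx x₁ row₁ < row₁.length)
    (hb₂ : bumpIdx x₂ row₂ < row₂.length)
    (hy : row₁[bumpIdx x₁ row₁] = row₂[bumpIdx x₂ row₂])
    (h : row₁.set (bumpIdx x₁ row₁) x₁ = row₂.set (bumpIdx x₂ row₂) x₂) :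
    x₁ = x₂ ∧ row₁ = row₂ := by
  have hp : bumpIdx x₁ row₁ = bumpIdx x₂ row₂ :=
    le_antisymm (bumpIdx_le_of_set_eq h₂ hb₂ hb₁ hy.symm h.symm)
      (bumpIdx_le_of_set_eq h₁ hb₁ hb₂ hy h)
  have hx : x₁ = x₂ := by
    have := congrArg (·[bumpIdx x₁ row₁]?) h
    rw [hp] at hb₁
    simp only [List.getElem?_set_self, hp, hb₁, hb₂] at this
    simpa using this
  refine ⟨hx, ?_⟩
  calc row₁
      = (row₁.set (bumpIdx x₁ row₁) x₁).set (bumpIdx x₁ row₁) row₁[bumpIdx x₁ row₁] :=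
        by simp
    _ = row₂ := by rw [h, hy, hp]; simp

theorem rowInsert_injective {P₁ P₂ : Tab} {x₁ x₂ : ℕ}
    (h₁ : SortedRows P₁) (h₂ : SortedRows P₂)
    (hnd₁ : (x₁ :: P₁.flatten).Nodup) (hnd₂ : (x₂ :: P₂.flatten).Nodup)
    (hsh : shape P₁ = shape P₂) (h : rowInsert x₁ P₁ = rowInsert x₂ P₂) :
    x₁ = x₂ ∧ P₁ = P₂ := by
  induction P₁ generalizing P₂ x₁ x₂ with
  | nil =>
    obtain rfl : P₂ = [] := List.map_eq_nil_iff.mp hsh.symm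
    simpa [rowInsert] using h
  | cons row₁ rest₁ ih =>
    obtain _ | ⟨row₂, rest₂⟩ := P₂
    · simp [shape] at hsh
    simp only [shape, List.map_cons, List.cons.injEq] at hsh
    simp only [List.flatten_cons, List.nodup_cons, List.mem_append, not_or] at hnd₁ hnd₂
    rw [rowInsert, rowInsert] at h
    simp only [List.get_eq_getElem] at h
    split_ifs at h with hb₁ hb₂ hb₂ <;> rw [List.cons.injEq] at h
    · obtain ⟨hy, hrest⟩ := ih (fun r hr => h₁ r (by simp [hr]))
        (fun r hr => h₂ r (by simp [hr]))
        (nodup_getElem_cons_of_nodup_append hnd₁.2 hb₁)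
        (nodup_getElem_cons_of_nodup_append hnd₂.2 hb₂) hsh.2 h.2
      obtain ⟨hx, hrow⟩ :=
        set_bumpIdx_injective (h₁ row₁ (by simp)) (h₂ row₂ (by simp)) hb₁ hb₂ hy h.1
      exact ⟨hx, by rw [hrow, hrest]⟩
    · simpa [hsh.1] using congrArg List.length h.1
    · simpa [hsh.1] using congrArg List.length h.1
    · obtain ⟨hrow, hx⟩ := List.append_inj' h.1 rfl
      simp_all

structure IsRSState (word : List (ℕ × ℕ)) (PQ : Tab × Tab) : Prop where
  sortedRows : SortedRows PQ.1
  perm_fst : PQ.1.flatten ~ word.map Prod.fst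
  shape_eq : shape PQ.1 = shape PQ.2
  perm_snd : PQ.2.flatten ~ word.map Prod.snd
  ne_nil : ∀ row ∈ PQ.2, row ≠ []

theorem IsRSState.RSstep {word : List (ℕ × ℕ)} {PQ : Tab × Tab} (h : IsRSState word PQ)
    {x : ℕ} (hx : (x :: word.map Prod.fst).Nodup) (l : ℕ) :
    IsRSState (word ++ [(x, l)]) (RSstep PQ (x, l)) := by
  obtain ⟨P, Q⟩ := PQ
  obtain ⟨i, hsh, hstep⟩ := RSstep_eq_place h.shape_eq x l
  rw [hstep]
  exact
    { sortedRows := h.sortedRows.rowInsert (h.perm_fst.cons x |>.nodup_iff.mpr hx)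
      perm_fst := by
        simpa using (flatten_rowInsert_perm x P).trans ((h.perm_fst.cons x).trans
          (List.perm_append_singleton _ _).symm)
      shape_eq := by rw [hsh, shape_place]
      perm_snd := by
        simpa using (flatten_place_perm Q i l).trans ((h.perm_snd.cons l).trans
          (List.perm_append_singleton _ _).symm)
      ne_nil := ne_nil_of_mem_place h.ne_nil i l }

theorem RSword_append_singleton (word : List (ℕ × ℕ)) (p : ℕ × ℕ) :
    RSword (word ++ [p]) = RSstep (RSword word) p := List.foldl_append ..

theorem isRSState_RSword {word : List (ℕ × ℕ)} (hnd : (word.map Prod.fst).Nodup) :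
    IsRSState word (RSword word) := by
  induction word using List.reverseRecOn with
  | nil => exact ⟨by simp [SortedRows, RSword], by simp [RSword], rfl, by simp [RSword],
      by simp [RSword]⟩
  | append_singleton word p ih =>
    rw [List.map_append, List.nodup_append_comm] at hnd
    rw [RSword_append_singleton]
    exact (ih (List.nodup_append.mp hnd).2.1).RSstep hnd p.2

theorem IsRSState.RSstep_injective {v₁ v₂ : List (ℕ × ℕ)} {PQ₁ PQ₂ : Tab × Tab}
    (h₁ : IsRSState v₁ PQ₁) (h₂ : IsRSState v₂ PQ₂) {x₁ x₂ l : ℕ}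
    (hx₁ : (x₁ :: v₁.map Prod.fst).Nodup) (hx₂ : (x₂ :: v₂.map Prod.fst).Nodup)
    (hl₁ : l ∉ v₁.map Prod.snd) (hl₂ : l ∉ v₂.map Prod.snd)
    (h : _root_.RSstep PQ₁ (x₁, l) = _root_.RSstep PQ₂ (x₂, l)) :
    x₁ = x₂ ∧ PQ₁ = PQ₂ := by
  obtain ⟨P₁, Q₁⟩ := PQ₁
  obtain ⟨P₂, Q₂⟩ := PQ₂
  obtain ⟨i₁, -, hstep₁⟩ := RSstep_eq_place h₁.shape_eq x₁ l
  obtain ⟨i₂, -, hstep₂⟩ := RSstep_eq_place h₂.shape_eq x₂ l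
  rw [hstep₁, hstep₂, Prod.mk.injEq] at h
  have hQ : Q₁ = Q₂ := place_left_injective h₁.ne_nil h₂.ne_nil
    (mt h₁.perm_snd.mem_iff.mp hl₁) (mt h₂.perm_snd.mem_iff.mp hl₂) h.2
  have hsh : shape P₁ = shape P₂ := by rw [h₁.shape_eq, h₂.shape_eq, hQ]
  obtain ⟨hx, hP⟩ := rowInsert_injective h₁.sortedRows h₂.sortedRows
    ((h₁.perm_fst.cons x₁).nodup_iff.mpr hx₁) ((h₂.perm_fst.cons x₂).nodup_iff.mpr hx₂)
    hsh h.1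
  exact ⟨hx, Prod.ext hP hQ⟩

theorem RSword_injective {w₁ w₂ : List (ℕ × ℕ)}
    (hlab : w₁.map Prod.snd = w₂.map Prod.snd)
    (hlab_nodup : (w₁.map Prod.snd).Nodup) (h₁ : (w₁.map Prod.fst).Nodup)
    (h₂ : (w₂.map Prod.fst).Nodup) (h : RSword w₁ = RSword w₂) : w₁ = w₂ := by
  induction w₁ using List.reverseRecOn generalizing w₂ with
  | nil => simpa using hlab.symm
  | append_singleton v₁ p₁ ih =>
    obtain rfl | ⟨v₂, p₂, rfl⟩ := List.eq_nil_or_concat w₂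
    · simp at hlab
    obtain ⟨x₁, l⟩ := p₁
    obtain ⟨x₂, l₂⟩ := p₂
    rw [List.concat_eq_append] at *
    simp only [List.map_append, List.map_cons, List.map_nil] at hlab
    obtain ⟨hv, hl⟩ := List.append_inj' hlab rfl
    obtain rfl : l = l₂ := by simpa using hl
    simp only [List.map_append, List.map_cons, List.map_nil] at hlab_nodup h₁ h₂
    rw [List.nodup_append_comm, List.singleton_append] at hlab_nodup h₁ h₂
    rw [RSword_append_singleton, RSword_append_singleton] at h
    have hl₂ : l ∉ v₂.map Prod.snd := hv ▸ (List.nodup_cons.mp hlab_nodup).1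
    obtain ⟨rfl, hPQ⟩ := (isRSState_RSword h₁.of_cons).RSstep_injective
      (isRSState_RSword h₂.of_cons) h₁ h₂ (List.nodup_cons.mp hlab_nodup).1 hl₂ h
    rw [ih hv hlab_nodup.of_cons h₁.of_cons h₂.of_cons hPQ]

namespace Equiv.Perm

variable {α ι : Type*} {f : α → ι} {τ : ι → Equiv.Perm α}

theorem fibre_apply_of_fixes_compl (hτ : ∀ k x, f x ≠ k → τ k x = x) (k : ι) (x : α) :
    f (τ k x) = f x := by
  by_cases hx : f x = k
  · by_contra hne
    have := hτ k _ (hx ▸ hne)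
    rw [(τ k).injective this] at hne
    exact hne rfl
  · rw [hτ k x hx]

theorem list_prod_map_apply_of_fixes_compl [DecidableEq ι]
    (hτ : ∀ k x, f x ≠ k → τ k x = x) {L : List ι} (hL : L.Nodup) (x : α) :
    (L.map τ).prod x = if f x ∈ L then τ (f x) x else x := by
  induction L with
  | nil => simp
  | cons k L ih =>
    obtain ⟨hkL, hL⟩ := List.nodup_cons.mp hL
    rw [List.map_cons, List.prod_cons, mul_apply, ih hL]
    by_cases hxL : f x ∈ L
    · have hk : f x ≠ k := fun h => hkL (h ▸ hxL)
      rw [if_pos hxL, if_pos (List.mem_cons_of_mem k hxL),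
        hτ k _ (by rwa [fibre_apply_of_fixes_compl hτ])]
    · by_cases hk : f x = k
      · subst hk; simp [hxL]
      · simp [hxL, hk, hτ k x hk]

theorem finRange_prod_map_apply_of_fixes_compl {r : ℕ} {f : α → Fin r}
    {τ : Fin r → Equiv.Perm α} (hτ : ∀ k x, f x ≠ k → τ k x = x) (x : α) :
    ((List.finRange r).map τ).prod x = τ (f x) x := by
  simp [list_prod_map_apply_of_fixes_compl hτ (List.nodup_finRange r)]

end Equiv.Perm

namespace GW

variable {r n : ℕ}

def ofPerm : Equiv.Perm (Fin n) →* GW r n where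
  toFun σ := ⟨fun _ => 0, σ⟩
  map_one' := rfl
  map_mul' σ τ := by ext <;> simp

theorem ofPerm_sigma_mul_diag (w : GW r n) : ofPerm w.σ * ⟨w.a, 1⟩ = w := by
  ext <;> simp [ofPerm]

theorem mem_labelIdx {w : GW r n} {k : ℕ} {i : Fin n} :
    i ∈ labelIdx w k ↔ (w.a i).val = k := by
  simp [labelIdx]

theorem eq_sigma_of_RSword_eq {w : GW r n} {k : ℕ} {τ : Equiv.Perm (Fin n)}
    (h : RSword ((labelIdx w k).map fun i => ((τ i : ℕ) + 1, (i : ℕ) + 1)) =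
      RSword (wordPairs w k))
    {i : Fin n} (hi : i ∈ labelIdx w k) : τ i = w.σ i := by
  have hnodup : (labelIdx w k).Nodup := (List.nodup_finRange n).filter _
  have hword := RSword_injective (by simp [wordPairs, Function.comp_def])
    (by simpa [Function.comp_def] using hnodup.map ((add_left_injective 1).comp Fin.val_injective))
    (by simpa [Function.comp_def] using
      hnodup.map ((add_left_injective 1).comp (Fin.val_injective.comp τ.injective)))
    (by simpa [wordPairs, Function.comp_def] using
      hnodup.map ((add_left_injective 1).comp (Fin.val_injective.comp w.σ.injective)))
    h
  exact Fin.ext (by simpa [wordPairs] using List.map_inj_left.mp hword i hi)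

end GW

theorem ascending_factorization_general (r n : ℕ) (hr : 1 ≤ r)
    (w : GW r n) (u : Fin r → GW r n)
    (hperm : ∀ k : Fin r, (u k).a = fun _ => 0)
    (hfix : ∀ k : Fin r, ∀ i : Fin n, i ∉ labelIdx w (k : ℕ) → (u k).σ i = i)
    (hRS : ∀ k : Fin r,
      RSword ((labelIdx w (k : ℕ)).map fun i => (((u k).σ i : ℕ) + 1, (i : ℕ) + 1)) =
        (Ptab w k, Qtab w k)) :
    w = ((List.finRange r).map u).prod * GW.mk w.a 1 ∧
      ∀ i : ℕ, i ≤ r - 1 →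
        sgnRep r n i w =
          (∏ k : Fin r, ((Equiv.Perm.sign (u k).σ : ℤ) : ℂ)) *
            (zeta r ^ i) ^ (∑ j, (w.a j).val) := by
  have : NeZero r := ⟨by omega⟩
  let exponent (j : Fin n) : Fin r := ⟨(w.a j).val, ZMod.val_lt _⟩
  have hσ : ((List.finRange r).map fun k => (u k).σ).prod = w.σ := by
    ext j
    rw [Equiv.Perm.finRange_prod_map_apply_of_fixes_compl (f := exponent)
      fun k i hi => hfix k i fun hmem => hi (Fin.ext (GW.mem_labelIdx.mp hmem))]
    exact congrArg Fin.val (GW.eq_sigma_of_RSword_eq (hRS _) (GW.mem_labelIdx.mpr rfl))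
  have hu (k : Fin r) : GW.ofPerm (u k).σ = u k := GW.ext (hperm k).symm rfl
  refine ⟨?_, fun i _ => ?_⟩
  · conv_lhs => rw [← GW.ofPerm_sigma_mul_diag w, ← hσ, map_list_prod, List.map_map]
    simp only [Function.comp_def, hu]
  · rw [sgnRep, ← hσ, map_list_prod, List.map_map, ← Fin.prod_univ_def]
    push_cast [Function.comp_apply]
    ring

/-- Let `w ∈ W_n` be ascending with `RS w = (P, Q)`.  For each `k` let `u k` be the
permutation matrix of `W_n` fixing every position outside the label set `n_k` and
whose classical Robinson–Schensted image on `n_k` is `(P_k, Q_k)`, and let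
`⟨w.a, 1⟩` denote the diagonal part `u_r` of `w`.  Then
`w = u_0 ⬝ u_1 ⋯ u_{r-1} ⬝ u_r`, and consequently
`sgn_i w = sgn(u_0) ⋯ sgn(u_{r-1}) ⬝ (ζ^i)^{a_1 + ⋯ + a_n}` for each
`0 ≤ i ≤ r - 1`. -/
theorem ascending_factorization (r n : ℕ) (hr : 1 ≤ r) (hn : 1 ≤ n)
    (w : GW r n) (hw : AscendingElem w) (u : Fin r → GW r n)
    (hperm : ∀ k : Fin r, (u k).a = fun _ => 0)
    (hfix : ∀ k : Fin r, ∀ i : Fin n, i ∉ labelIdx w (k : ℕ) → (u k).σ i = i)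
    (hRS : ∀ k : Fin r,
      RSword ((labelIdx w (k : ℕ)).map fun i => (((u k).σ i : ℕ) + 1, (i : ℕ) + 1)) =
        (Ptab w k, Qtab w k)) :
    w = ((List.finRange r).map u).prod * GW.mk w.a 1 ∧
      ∀ i : ℕ, i ≤ r - 1 →
        sgnRep r n i w =
          (∏ k : Fin r, ((Equiv.Perm.sign (u k).σ : ℤ) : ℂ)) *
            (zeta r ^ i) ^ (∑ j, (w.a j).val) :=
  ascending_factorization_general r n hr w u hperm hfix hRS
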